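/- arXiv:1406.3617 — 4 statements merged into one kernel-verified Lean document; each statement's English description precedes it below -/
import Mathlib

section
/- Let T be a finite tree of height h with root r, leaf level L, and μ the uniform distribution over proper k-colourings of T. For any colour c, if X is a random k-colouring conditioned on X(r)=c, then Σ_{σ_L} μ_L(σ_L)·|μ^{σ_L}_{r}(c) − 1/k| ≤ sqrt( (1/k) · max_{q∈[k]} || μ^{X_L} − μ^{Z^q_L} ||_{r} ), where Z^q is a random k-colouring conditioned on Z^q(r)=q and μ^{X_L}, μ^{Z^q_L} are the Gibbs measures conditioned on the (random) leaf colourings X_L and Z^q_L. -/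
open Finset

noncomputable section
open scoped Classical

variable {V : Type*}

/-- A proper `k`-colouring w.r.t. an adjacency relation `Adj`. -/
def Proper (k : ℕ) (Adj : V → V → Prop) (σ : V → Fin k) : Prop :=
  ∀ u v, Adj u v → σ u ≠ σ v

/-- Number of colourings satisfying a predicate. -/
noncomputable def cnt [Fintype V] [DecidableEq V] (k : ℕ) (P : (V → Fin k) → Prop) : ℕ :=
  (Finset.univ.filter P).card

/-- Probability that the root gets colour `c` under the uniform distribution over
proper colourings conditioned on the event `B`. -/
noncomputable def condProbRoot [Fintype V] [DecidableEq V] (k : ℕ) (Adj : V → V → Prop)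
    (r : V) (B : (V → Fin k) → Prop) (c : Fin k) : ℝ :=
  (cnt k (fun σ => Proper k Adj σ ∧ B σ ∧ σ r = c) : ℝ) /
    (cnt k (fun σ => Proper k Adj σ ∧ B σ) : ℝ)

/-- Total variation distance of the root marginals of the Gibbs distribution
conditioned on `B₁` resp. `B₂`. -/
noncomputable def tvRoot [Fintype V] [DecidableEq V] (k : ℕ) (Adj : V → V → Prop)
    (r : V) (B₁ B₂ : (V → Fin k) → Prop) : ℝ :=
  (1/2) * ∑ c : Fin k, |condProbRoot k Adj r B₁ c - condProbRoot k Adj r B₂ c|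

/-- Marginal probability, under the uniform distribution over proper colourings,
that the leaves `L` receive the colouring `τ`. -/
noncomputable def leafMarg [Fintype V] [DecidableEq V] (k : ℕ) (Adj : V → V → Prop)
    (L : Finset V) (τ : ↥L → Fin k) : ℝ :=
  (cnt k (fun σ => Proper k Adj σ ∧ ∀ v : ↥L, σ ↑v = τ v) : ℝ) /
    (cnt k (fun σ => Proper k Adj σ) : ℝ)

/-- Marginal probability that the leaves `L` receive the colouring `τ`, conditional
on the root being coloured `a`. -/
noncomputable def leafMargCond [Fintype V] [DecidableEq V] (k : ℕ) (Adj : V → V → Prop)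
    (r : V) (L : Finset V) (a : Fin k) (τ : ↥L → Fin k) : ℝ :=
  (cnt k (fun σ => Proper k Adj σ ∧ σ r = a ∧ ∀ v : ↥L, σ ↑v = τ v) : ℝ) /
    (cnt k (fun σ => Proper k Adj σ ∧ σ r = a) : ℝ)

section Aux
variable [Fintype V] [DecidableEq V]

lemma cnt_congr {k : ℕ} {P Q : (V → Fin k) → Prop} (h : ∀ σ, P σ ↔ Q σ) :
    cnt k P = cnt k Q := by
  unfold cnt
  congr 1
  exact Finset.filter_congr fun σ _ => by simp [h σ]

lemma cnt_mono {k : ℕ} {P Q : (V → Fin k) → Prop} (h : ∀ σ, P σ → Q σ) :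
    cnt k P ≤ cnt k Q := by
  unfold cnt
  apply Finset.card_le_card
  intro σ hσ
  simp only [Finset.mem_filter, Finset.mem_univ, true_and] at *
  exact h σ hσ

lemma cnt_fiber {β : Type*} [Fintype β] [DecidableEq β] {k : ℕ} (P : (V → Fin k) → Prop)
    (g : (V → Fin k) → β) :
    cnt k P = ∑ b : β, cnt k (fun σ => P σ ∧ g σ = b) := by
  unfold cnt
  rw [Finset.card_eq_sum_card_fiberwise (f := g) (t := Finset.univ)
    (fun x _ => Finset.mem_univ (g x))]
  refine Finset.sum_congr rfl fun b _ => ?_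
  rw [Finset.filter_filter]
  congr!

lemma cnt_root_eq {k : ℕ} (Adj : V → V → Prop) (r : V) (a b : Fin k) :
    cnt k (fun σ => Proper k Adj σ ∧ σ r = a)
      = cnt k (fun σ => Proper k Adj σ ∧ σ r = b) := by
  unfold cnt
  apply Finset.card_equiv (Equiv.piCongrRight fun _ : V => Equiv.swap a b)
  intro σ
  simp only [Finset.mem_filter, Finset.mem_univ, true_and, Equiv.piCongrRight_apply]
  constructor
  · rintro ⟨hp, hr⟩
    constructor
    · intro u v huv hne
      exact hp u v huv ((Equiv.swap a b).injective hne)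
    · show Equiv.swap a b (σ r) = b
      rw [hr, Equiv.swap_apply_left]
  · rintro ⟨hp, hr⟩
    constructor
    · intro u v huv hne
      apply hp u v huv
      show Equiv.swap a b (σ u) = Equiv.swap a b (σ v)
      exact congrArg _ hne
    · have hr' : Equiv.swap a b (σ r) = b := hr
      have h2 := congrArg (Equiv.swap a b) hr'
      rwa [Equiv.swap_apply_self, Equiv.swap_apply_right] at h2

lemma cnt_root_mul {k : ℕ} (Adj : V → V → Prop) (r : V) (a : Fin k) :
    k * cnt k (fun σ => Proper k Adj σ ∧ σ r = a)
      = cnt k (fun σ => Proper k Adj σ) := by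
  rw [cnt_fiber (fun σ => Proper k Adj σ) (fun σ => σ r)]
  rw [Finset.sum_congr rfl fun b _ => cnt_root_eq Adj r b a]
  simp [Finset.sum_const, Finset.card_univ]

end Aux
section Prob
variable [Fintype V] [DecidableEq V] {k : ℕ} (Adj : V → V → Prop) (r : V) (L : Finset V)

lemma condProbRoot_nonneg (B : (V → Fin k) → Prop) (a : Fin k) :
    0 ≤ condProbRoot k Adj r B a := by
  unfold condProbRoot; positivity

lemma leafMarg_nonneg (σL : ↥L → Fin k) : 0 ≤ leafMarg k Adj L σL := by
  unfold leafMarg; positivity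

lemma condProbRoot_sum {B : (V → Fin k) → Prop}
    (h : cnt k (fun σ => Proper k Adj σ ∧ B σ) ≠ 0) :
    ∑ a : Fin k, condProbRoot k Adj r B a = 1 := by
  unfold condProbRoot
  rw [← Finset.sum_div, div_eq_one_iff_eq (by exact_mod_cast h), ← Nat.cast_sum]
  refine Nat.cast_inj.mpr ?_
  rw [cnt_fiber (fun σ => Proper k Adj σ ∧ B σ) (fun σ => σ r)]
  exact Finset.sum_congr rfl fun a _ => cnt_congr fun σ => by tauto

lemma sum_leafMarg (hΩ : cnt k (fun σ => Proper k Adj σ) ≠ 0) :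
    ∑ σL : ↥L → Fin k, leafMarg k Adj L σL = 1 := by
  unfold leafMarg
  rw [← Finset.sum_div, div_eq_one_iff_eq (by exact_mod_cast hΩ), ← Nat.cast_sum]
  refine Nat.cast_inj.mpr ?_
  rw [cnt_fiber (fun σ => Proper k Adj σ) (fun σ => fun v : ↥L => σ ↑v)]
  exact Finset.sum_congr rfl fun σL _ => cnt_congr fun σ => by
    simp only [funext_iff]

lemma sum_leafMargCond (hΩ : cnt k (fun σ => Proper k Adj σ) ≠ 0) (a : Fin k) :
    ∑ σL : ↥L → Fin k, leafMargCond k Adj r L a σL = 1 := by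
  have hNa : cnt k (fun σ => Proper k Adj σ ∧ σ r = a) ≠ 0 := by
    intro h0
    exact hΩ (by rw [← cnt_root_mul Adj r a, h0, Nat.mul_zero])
  unfold leafMargCond
  rw [← Finset.sum_div, div_eq_one_iff_eq (by exact_mod_cast hNa), ← Nat.cast_sum]
  refine Nat.cast_inj.mpr ?_
  rw [cnt_fiber (fun σ => Proper k Adj σ ∧ σ r = a) (fun σ => fun v : ↥L => σ ↑v)]
  refine Finset.sum_congr rfl fun σL _ => cnt_congr fun σ => by
    simp only [funext_iff, and_assoc]

lemma cnt_root_cast (hk : 0 < k) (a : Fin k) :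
    (cnt k (fun σ => Proper k Adj σ ∧ σ r = a) : ℝ)
      = (cnt k (fun σ => Proper k Adj σ) : ℝ) / k := by
  have h := cnt_root_mul Adj r a
  have hR : (k : ℝ) * (cnt k (fun σ => Proper k Adj σ ∧ σ r = a) : ℝ)
      = (cnt k (fun σ => Proper k Adj σ) : ℝ) := by exact_mod_cast h
  have hkR : (k : ℝ) ≠ 0 := by positivity
  field_simp
  linarith

lemma key1 (hk : 0 < k) (a : Fin k) (σL : ↥L → Fin k) :
    leafMarg k Adj L σL * condProbRoot k Adj r (fun σ => ∀ v : ↥L, σ ↑v = σL v) a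
      = (k : ℝ)⁻¹ * leafMargCond k Adj r L a σL := by
  unfold leafMarg condProbRoot leafMargCond
  rw [show cnt k (fun σ => Proper k Adj σ ∧ σ r = a ∧ ∀ v : ↥L, σ ↑v = σL v)
      = cnt k (fun σ => Proper k Adj σ ∧ (∀ v : ↥L, σ ↑v = σL v) ∧ σ r = a) from
    cnt_congr fun σ => by tauto]
  rw [cnt_root_cast Adj r hk a]
  by_cases h : cnt k (fun σ => Proper k Adj σ ∧ ∀ v : ↥L, σ ↑v = σL v) = 0
  · have hm : cnt k (fun σ => Proper k Adj σ ∧ (∀ v : ↥L, σ ↑v = σL v) ∧ σ r = a) = 0 :=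
      Nat.le_zero.mp (h ▸ cnt_mono fun σ hσ => ⟨hσ.1, hσ.2.1⟩)
    rw [h, hm]
    simp
  · have hΩ : cnt k (fun σ => Proper k Adj σ) ≠ 0 := by
      intro h0
      exact h (Nat.le_zero.mp (h0 ▸ cnt_mono fun σ hσ => hσ.1))
    have h1 : (cnt k (fun σ => Proper k Adj σ ∧ ∀ v : ↥L, σ ↑v = σL v) : ℝ) ≠ 0 := by
      exact_mod_cast h
    have h2 : (cnt k (fun σ => Proper k Adj σ) : ℝ) ≠ 0 := by exact_mod_cast hΩ
    have hkR : (k : ℝ) ≠ 0 := by positivity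
    rw [div_mul_div_comm, mul_comm (cnt k (fun σ => Proper k Adj σ) : ℝ), mul_div_mul_left _ _ h1]
    field_simp

lemma key2 (hk : 0 < k) (hΩ : cnt k (fun σ => Proper k Adj σ) ≠ 0) (σL : ↥L → Fin k) :
    ∑ a : Fin k, leafMargCond k Adj r L a σL = k * leafMarg k Adj L σL := by
  unfold leafMargCond leafMarg
  have h2 : (cnt k (fun σ => Proper k Adj σ) : ℝ) ≠ 0 := by exact_mod_cast hΩ
  have hkR : (k : ℝ) ≠ 0 := by positivity
  rw [Finset.sum_congr rfl fun a _ => by rw [cnt_root_cast Adj r hk a]]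
  simp only [div_div_eq_mul_div]
  rw [← Finset.sum_div, ← Finset.sum_mul, ← Nat.cast_sum]
  rw [show ∑ a : Fin k, cnt k (fun σ => Proper k Adj σ ∧ σ r = a ∧ ∀ v : ↥L, σ ↑v = σL v)
      = cnt k (fun σ => Proper k Adj σ ∧ ∀ v : ↥L, σ ↑v = σL v) from ?_]
  · ring
  · rw [cnt_fiber (fun σ => Proper k Adj σ ∧ ∀ v : ↥L, σ ↑v = σL v) (fun σ => σ r)]
    exact Finset.sum_congr rfl fun a _ => cnt_congr fun σ => by tauto

lemma leafMargCond_pos (a : Fin k) (σL : ↥L → Fin k)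
    (h : 0 < leafMargCond k Adj r L a σL) :
    cnt k (fun σ => Proper k Adj σ ∧ ∀ v : ↥L, σ ↑v = σL v) ≠ 0 := by
  intro h0
  have hm : cnt k (fun σ => Proper k Adj σ ∧ σ r = a ∧ ∀ v : ↥L, σ ↑v = σL v) = 0 :=
    Nat.le_zero.mp (h0 ▸ cnt_mono fun σ hσ => ⟨hσ.1, hσ.2.2⟩)
  unfold leafMargCond at h
  rw [hm] at h
  simp at h

lemma abs_sum_trick (d : Fin k → ℝ) (hzero : ∑ a : Fin k, d a = 0) (c : Fin k) :
    d c ≤ (1/2) * ∑ a : Fin k, |d a| := by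
  have hle : ∀ a ∈ Finset.univ, (0:ℝ) ≤ (|d a| + d a) / 2 := fun a _ => by
    have := neg_abs_le (d a); linarith
  have h1 : d c ≤ (|d c| + d c) / 2 := by have := le_abs_self (d c); linarith
  have h2 := Finset.single_le_sum hle (Finset.mem_univ c)
  have h3 : ∑ a : Fin k, (|d a| + d a) / 2 = (1/2) * ∑ a : Fin k, |d a| := by
    rw [← Finset.sum_div, Finset.sum_add_distrib, hzero, add_zero]
    ring
  linarith

lemma diff_le_tv (B₁ B₂ : (V → Fin k) → Prop) (c : Fin k)
    (h1 : cnt k (fun σ => Proper k Adj σ ∧ B₁ σ) ≠ 0)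
    (h2 : cnt k (fun σ => Proper k Adj σ ∧ B₂ σ) ≠ 0) :
    condProbRoot k Adj r B₁ c - condProbRoot k Adj r B₂ c ≤ tvRoot k Adj r B₁ B₂ := by
  have hzero : ∑ a : Fin k, (condProbRoot k Adj r B₁ a - condProbRoot k Adj r B₂ a) = 0 := by
    rw [Finset.sum_sub_distrib, condProbRoot_sum Adj r h1, condProbRoot_sum Adj r h2]
    ring
  exact abs_sum_trick (fun a => condProbRoot k Adj r B₁ a - condProbRoot k Adj r B₂ a) hzero c

end Prob

/-- for any family of couplings `ν q` of the leaf colouring `X_L` of a random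
colouring conditioned on root colour `c` with the leaf colouring `Z^q_L` of a random colouring
conditioned on root colour `q`,
`Σ_{σ_L} μ_L(σ_L)·|μ^{σ_L}_r(c) − 1/k| ≤ sqrt((1/k)·max_q E_ν ‖μ^{X_L} − μ^{Z^q_L}‖_r)`. -/
theorem stmt1 [Fintype V] [DecidableEq V] (k : ℕ) (hk : 0 < k)
    (Adj : V → V → Prop) (r : V) (L : Finset V) (c : Fin k)
    (hΩ : cnt k (fun σ => Proper k Adj σ) ≠ 0)
    (ν : Fin k → (↥L → Fin k) → (↥L → Fin k) → ℝ)
    (hν0 : ∀ q σL τL, 0 ≤ ν q σL τL)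
    (hν1 : ∀ q σL, ∑ τL : ↥L → Fin k, ν q σL τL = leafMargCond k Adj r L c σL)
    (hν2 : ∀ q τL, ∑ σL : ↥L → Fin k, ν q σL τL = leafMargCond k Adj r L q τL) :
    ∑ σL : ↥L → Fin k,
        leafMarg k Adj L σL *
          |condProbRoot k Adj r (fun σ => ∀ v : ↥L, σ ↑v = σL v) c - 1 / k|
      ≤ Real.sqrt ((1 / k) *
          (Finset.univ.sup' (Finset.univ_nonempty_iff.mpr ⟨⟨0, hk⟩⟩)
            (fun q : Fin k =>
              ∑ σL : ↥L → Fin k, ∑ τL : ↥L → Fin k,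
                ν q σL τL *
                  tvRoot k Adj r (fun σ => ∀ v : ↥L, σ ↑v = σL v)
                    (fun σ => ∀ v : ↥L, σ ↑v = τL v)))) := by
  classical
  have hkR : (0:ℝ) < k := by exact_mod_cast hk
  have hkne : (k:ℝ) ≠ 0 := ne_of_gt hkR
  have hPF : ∑ σL : ↥L → Fin k, leafMarg k Adj L σL *
      condProbRoot k Adj r (fun σ => ∀ v : ↥L, σ ↑v = σL v) c = 1 / k := by
    rw [Finset.sum_congr rfl fun σL _ => key1 Adj r L hk c σL, ← Finset.mul_sum,
      sum_leafMargCond Adj r L hΩ c, mul_one, one_div]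
  set E : ℝ := ∑ σL : ↥L → Fin k, leafMargCond k Adj r L c σL *
      condProbRoot k Adj r (fun σ => ∀ v : ↥L, σ ↑v = σL v) c with hE
  set M : ℝ := Finset.univ.sup' (Finset.univ_nonempty_iff.mpr ⟨⟨0, hk⟩⟩)
      (fun q : Fin k =>
        ∑ σL : ↥L → Fin k, ∑ τL : ↥L → Fin k,
          ν q σL τL *
            tvRoot k Adj r (fun σ => ∀ v : ↥L, σ ↑v = σL v)
              (fun σ => ∀ v : ↥L, σ ↑v = τL v)) with hM
  have hS : ∑ σL : ↥L → Fin k, leafMarg k Adj L σL *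
      (condProbRoot k Adj r (fun σ => ∀ v : ↥L, σ ↑v = σL v) c - 1 / k) ^ 2
      = (k:ℝ)⁻¹ * (E - 1/k) := by
    have step1 : ∀ σL : ↥L → Fin k,
        leafMarg k Adj L σL *
            (condProbRoot k Adj r (fun σ => ∀ v : ↥L, σ ↑v = σL v) c - 1/k) ^ 2
          = (leafMarg k Adj L σL *
                condProbRoot k Adj r (fun σ => ∀ v : ↥L, σ ↑v = σL v) c) *
              condProbRoot k Adj r (fun σ => ∀ v : ↥L, σ ↑v = σL v) c
            - (2/k) * (leafMarg k Adj L σL *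
                condProbRoot k Adj r (fun σ => ∀ v : ↥L, σ ↑v = σL v) c)
            + (1/k^2) * leafMarg k Adj L σL := fun σL => by ring
    rw [Finset.sum_congr rfl fun σL _ => step1 σL]
    rw [Finset.sum_add_distrib, Finset.sum_sub_distrib, ← Finset.mul_sum, ← Finset.mul_sum,
      hPF, sum_leafMarg Adj L hΩ]
    rw [Finset.sum_congr rfl fun σL _ => by rw [key1 Adj r L hk c σL]]
    rw [Finset.sum_congr rfl fun σL _ =>
      mul_assoc ((k:ℝ)⁻¹) (leafMargCond k Adj r L c σL)
        (condProbRoot k Adj r (fun σ => ∀ v : ↥L, σ ↑v = σL v) c)]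
    rw [← Finset.mul_sum, ← hE]
    ring
  have hsum_q : ∑ q : Fin k, ∑ τL : ↥L → Fin k, leafMargCond k Adj r L q τL *
      condProbRoot k Adj r (fun σ => ∀ v : ↥L, σ ↑v = τL v) c = 1 := by
    rw [Finset.sum_comm]
    rw [Finset.sum_congr rfl fun τL _ => by
      rw [← Finset.sum_mul, key2 Adj r L hk hΩ τL, mul_assoc]]
    rw [← Finset.mul_sum, hPF]
    field_simp
  have hdiff : ∀ q : Fin k,
      ∑ σL : ↥L → Fin k, ∑ τL : ↥L → Fin k, ν q σL τL *
          (condProbRoot k Adj r (fun σ => ∀ v : ↥L, σ ↑v = σL v) c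
            - condProbRoot k Adj r (fun σ => ∀ v : ↥L, σ ↑v = τL v) c)
        = E - ∑ τL : ↥L → Fin k, leafMargCond k Adj r L q τL *
            condProbRoot k Adj r (fun σ => ∀ v : ↥L, σ ↑v = τL v) c := by
    intro q
    rw [Finset.sum_congr rfl fun σL _ => Finset.sum_congr rfl fun τL _ =>
      mul_sub (ν q σL τL) (condProbRoot k Adj r (fun σ => ∀ v : ↥L, σ ↑v = σL v) c)
        (condProbRoot k Adj r (fun σ => ∀ v : ↥L, σ ↑v = τL v) c)]
    rw [Finset.sum_congr rfl fun σL _ => Finset.sum_sub_distrib _ _, Finset.sum_sub_distrib]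
    congr 1
    · rw [Finset.sum_congr rfl fun σL _ => by rw [← Finset.sum_mul, hν1 q σL], hE]
    · rw [Finset.sum_comm]
      exact Finset.sum_congr rfl fun τL _ => by rw [← Finset.sum_mul, hν2 q τL]
  have hpoint : ∀ (q : Fin k) (σL τL : ↥L → Fin k),
      ν q σL τL * (condProbRoot k Adj r (fun σ => ∀ v : ↥L, σ ↑v = σL v) c
          - condProbRoot k Adj r (fun σ => ∀ v : ↥L, σ ↑v = τL v) c)
        ≤ ν q σL τL * tvRoot k Adj r (fun σ => ∀ v : ↥L, σ ↑v = σL v)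
            (fun σ => ∀ v : ↥L, σ ↑v = τL v) := by
    intro q σL τL
    rcases (hν0 q σL τL).eq_or_lt with h | h
    · rw [← h]; simp
    · refine mul_le_mul_of_nonneg_left ?_ h.le
      have h1 : 0 < leafMargCond k Adj r L c σL :=
        lt_of_lt_of_le h (by
          rw [← hν1 q σL]
          exact Finset.single_le_sum (fun τ _ => hν0 q σL τ) (Finset.mem_univ τL))
      have h2 : 0 < leafMargCond k Adj r L q τL :=
        lt_of_lt_of_le h (by
          rw [← hν2 q τL]
          exact Finset.single_le_sum (fun σ _ => hν0 q σ τL) (Finset.mem_univ σL))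
      exact diff_le_tv Adj r _ _ c (leafMargCond_pos Adj r L c σL h1)
        (leafMargCond_pos Adj r L q τL h2)
  have hDM : ∀ q : Fin k,
      (∑ σL : ↥L → Fin k, ∑ τL : ↥L → Fin k,
        ν q σL τL * tvRoot k Adj r (fun σ => ∀ v : ↥L, σ ↑v = σL v)
          (fun σ => ∀ v : ↥L, σ ↑v = τL v)) ≤ M := fun q => by
    rw [hM]
    exact Finset.le_sup' (fun q : Fin k =>
      ∑ σL : ↥L → Fin k, ∑ τL : ↥L → Fin k,
        ν q σL τL * tvRoot k Adj r (fun σ => ∀ v : ↥L, σ ↑v = σL v)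
          (fun σ => ∀ v : ↥L, σ ↑v = τL v)) (Finset.mem_univ q)
  have hEsum : ∑ q : Fin k, (E - ∑ τL : ↥L → Fin k, leafMargCond k Adj r L q τL *
      condProbRoot k Adj r (fun σ => ∀ v : ↥L, σ ↑v = τL v) c) = k * E - 1 := by
    rw [Finset.sum_sub_distrib, hsum_q, Finset.sum_const, Finset.card_univ, Fintype.card_fin,
      nsmul_eq_mul]
  have hsum_le : (k:ℝ) * E - 1 ≤ k * M := by
    rw [← hEsum]
    calc ∑ q : Fin k, (E - ∑ τL : ↥L → Fin k, leafMargCond k Adj r L q τL *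
            condProbRoot k Adj r (fun σ => ∀ v : ↥L, σ ↑v = τL v) c)
        = ∑ q : Fin k, ∑ σL : ↥L → Fin k, ∑ τL : ↥L → Fin k, ν q σL τL *
            (condProbRoot k Adj r (fun σ => ∀ v : ↥L, σ ↑v = σL v) c
              - condProbRoot k Adj r (fun σ => ∀ v : ↥L, σ ↑v = τL v) c) :=
          Finset.sum_congr rfl fun q _ => (hdiff q).symm
      _ ≤ ∑ q : Fin k, ∑ σL : ↥L → Fin k, ∑ τL : ↥L → Fin k,
            ν q σL τL * tvRoot k Adj r (fun σ => ∀ v : ↥L, σ ↑v = σL v)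
              (fun σ => ∀ v : ↥L, σ ↑v = τL v) :=
          Finset.sum_le_sum fun q _ => Finset.sum_le_sum fun σL _ =>
            Finset.sum_le_sum fun τL _ => hpoint q σL τL
      _ ≤ ∑ _q : Fin k, M := Finset.sum_le_sum fun q _ => hDM q
      _ = (k:ℝ) * M := by
          simp [Finset.sum_const, Finset.card_univ, nsmul_eq_mul]
  have hEM : E - 1/k ≤ M := by
    have h2 : (k:ℝ) * (E - 1/k) ≤ k * M := by
      rw [mul_sub, mul_one_div, div_self hkne]
      linarith
    exact le_of_mul_le_mul_left h2 hkR
  apply Real.le_sqrt_of_sq_le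
  have cauchy : (∑ σL : ↥L → Fin k, leafMarg k Adj L σL *
      |condProbRoot k Adj r (fun σ => ∀ v : ↥L, σ ↑v = σL v) c - 1 / k|) ^ 2
      ≤ ∑ σL : ↥L → Fin k, leafMarg k Adj L σL *
          (condProbRoot k Adj r (fun σ => ∀ v : ↥L, σ ↑v = σL v) c - 1 / k) ^ 2 := by
    have hcs := sum_mul_sq_le_sq_mul_sq (Finset.univ : Finset (↥L → Fin k))
      (fun σL => Real.sqrt (leafMarg k Adj L σL))
      (fun σL => Real.sqrt (leafMarg k Adj L σL) *
        |condProbRoot k Adj r (fun σ => ∀ v : ↥L, σ ↑v = σL v) c - 1/k|)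
    calc (∑ σL : ↥L → Fin k, leafMarg k Adj L σL *
          |condProbRoot k Adj r (fun σ => ∀ v : ↥L, σ ↑v = σL v) c - 1 / k|) ^ 2
        = (∑ σL : ↥L → Fin k, Real.sqrt (leafMarg k Adj L σL) *
            (Real.sqrt (leafMarg k Adj L σL) *
              |condProbRoot k Adj r (fun σ => ∀ v : ↥L, σ ↑v = σL v) c - 1 / k|)) ^ 2 := by
          congr 1
          exact Finset.sum_congr rfl fun σL _ => by
            rw [← mul_assoc, Real.mul_self_sqrt (leafMarg_nonneg Adj L σL)]
      _ ≤ (∑ σL : ↥L → Fin k, Real.sqrt (leafMarg k Adj L σL) ^ 2) *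
            ∑ σL : ↥L → Fin k, (Real.sqrt (leafMarg k Adj L σL) *
              |condProbRoot k Adj r (fun σ => ∀ v : ↥L, σ ↑v = σL v) c - 1 / k|) ^ 2 := hcs
      _ = (∑ σL : ↥L → Fin k, leafMarg k Adj L σL) *
            ∑ σL : ↥L → Fin k, leafMarg k Adj L σL *
              (condProbRoot k Adj r (fun σ => ∀ v : ↥L, σ ↑v = σL v) c - 1 / k) ^ 2 := by
          congr 1
          · exact Finset.sum_congr rfl fun σL _ => Real.sq_sqrt (leafMarg_nonneg Adj L σL)
          · exact Finset.sum_congr rfl fun σL _ => by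
              rw [mul_pow, Real.sq_sqrt (leafMarg_nonneg Adj L σL), sq_abs]
      _ = ∑ σL : ↥L → Fin k, leafMarg k Adj L σL *
            (condProbRoot k Adj r (fun σ => ∀ v : ↥L, σ ↑v = σL v) c - 1 / k) ^ 2 := by
          rw [sum_leafMarg Adj L hΩ, one_mul]
  refine cauchy.trans ?_
  rw [hS]
  calc (k:ℝ)⁻¹ * (E - 1/k) ≤ (k:ℝ)⁻¹ * M :=
        mul_le_mul_of_nonneg_left hEM (by positivity)
    _ = 1/(k:ℝ) * M := by rw [one_div]
end
end

section
/- In the coupling of Proposition (Delta-Start): suppose X(v_j)=c ≠ q=Y(v_j) for a vertex v_j on a path in a tree, and X, Y are proper colourings conditioned on boundaries. Then Pr[X(v_{j+1}) ≠ Y(v_{j+1}) | X(v_j)=c, Y(v_j)=q] ≤ max{ Pr[X(v_{j+1})=q | X(v_j)=c], Pr[Y(v_{j+1})=c | Y(v_j)=q] }, since conditional on X(v_{j+1}) ≠ q and Y(v_{j+1}) ≠ c there is a coupling making X(v_{j+1}) = Y(v_{j+1}) with probability 1. -/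
open Finset

/-- one step of the path coupling. `P` and `Q` are the conditional laws of
`X(v_{j+1})` given `X(v_j) = c` and of `Y(v_{j+1})` given `Y(v_j) = q` (proper colourings,
so `P c = 0`, `Q q = 0`) which agree off the two forbidden colours. Then there is a
coupling `ν` of `P` and `Q` whose disagreement probability is at most
`max(P q, Q c) = max(Pr[X(v_{j+1})=q | X(v_j)=c], Pr[Y(v_{j+1})=c | Y(v_j)=q])`. -/
theorem stmt14 (k : ℕ) (c q : Fin k) (hcq : c ≠ q)
    (P Q : Fin k → ℝ)
    (hP0 : ∀ a, 0 ≤ P a) (hQ0 : ∀ a, 0 ≤ Q a)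
    (hP1 : ∑ a : Fin k, P a = 1) (hQ1 : ∑ a : Fin k, Q a = 1)
    (hPc : P c = 0) (hQq : Q q = 0)
    (hagree : ∀ a, a ≠ c → a ≠ q → P a = Q a) :
    ∃ ν : Fin k → Fin k → ℝ,
      (∀ a b, 0 ≤ ν a b) ∧
      (∀ a, ∑ b : Fin k, ν a b = P a) ∧
      (∀ b, ∑ a : Fin k, ν a b = Q b) ∧
      (∑ a : Fin k, ∑ b : Fin k, (if a ≠ b then ν a b else 0)) ≤ max (P q) (Q c) := by
  classical
  have hsP : ∑ a ∈ (univ \ ({c, q} : Finset (Fin k))), P a = 1 - (P c + P q) := by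
    rw [Finset.sum_sdiff_eq_sub (Finset.subset_univ _), hP1, Finset.sum_pair hcq]
  have hsQ : ∑ a ∈ (univ \ ({c, q} : Finset (Fin k))), Q a = 1 - (Q c + Q q) := by
    rw [Finset.sum_sdiff_eq_sub (Finset.subset_univ _), hQ1, Finset.sum_pair hcq]
  have h1 : ∑ a ∈ (univ \ ({c, q} : Finset (Fin k))), P a
      = ∑ a ∈ (univ \ ({c, q} : Finset (Fin k))), Q a := by
    refine Finset.sum_congr rfl fun a ha => ?_
    simp only [Finset.mem_sdiff, Finset.mem_insert, Finset.mem_singleton] at ha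
    exact hagree a (fun h => ha.2 (Or.inl h)) (fun h => ha.2 (Or.inr h))
  have key : P q = Q c := by rw [hsP, hsQ] at h1; linarith
  refine ⟨fun a b => if a = b then (if a = c ∨ a = q then 0 else P a)
      else (if a = q ∧ b = c then P q else 0), ?_, ?_, ?_, ?_⟩
  · intro a b
    dsimp only
    split_ifs <;> first | exact le_refl 0 | exact hP0 _
  · intro a
    by_cases hac : a = c
    · rw [hac, hPc]
      apply Finset.sum_eq_zero
      intro b _
      dsimp only
      by_cases h : c = b <;> simp [h, hcq]
    · by_cases haq : a = q
      · rw [haq]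
        rw [Finset.sum_eq_single c]
        · dsimp only
          rw [if_neg (Ne.symm hcq), if_pos ⟨rfl, rfl⟩]
        · intro b _ hb
          dsimp only
          by_cases h : q = b
          · simp [h]
          · rw [if_neg h, if_neg (fun hh => hb hh.2)]
        · simp
      · rw [Finset.sum_eq_single a]
        · dsimp only
          rw [if_pos rfl, if_neg (by tauto)]
        · intro b _ hb
          dsimp only
          rw [if_neg (fun h => hb h.symm), if_neg (fun h => haq h.1)]
        · simp
  · intro b
    by_cases hbq : b = q
    · rw [hbq, hQq]
      apply Finset.sum_eq_zero
      intro a _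
      dsimp only
      by_cases h : a = q <;> simp [h]
    · by_cases hbc : b = c
      · rw [hbc]
        rw [Finset.sum_eq_single q]
        · dsimp only
          rw [if_neg (fun h => hcq h.symm), if_pos ⟨rfl, rfl⟩]
          exact key
        · intro a _ ha
          dsimp only
          by_cases h : a = c
          · simp [h]
          · rw [if_neg h, if_neg (fun hh => ha hh.1)]
        · simp
      · rw [Finset.sum_eq_single b]
        · dsimp only
          rw [if_pos rfl, if_neg (by tauto)]
          exact hagree b hbc hbq
        · intro a _ ha
          dsimp only
          rw [if_neg ha, if_neg (fun h => hbc h.2)]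
        · simp
  · have hrw : (∑ a : Fin k, ∑ b : Fin k,
        (if a ≠ b then (if a = b then (if a = c ∨ a = q then 0 else P a)
          else (if a = q ∧ b = c then P q else 0)) else 0))
        = ∑ a : Fin k, ∑ b : Fin k, (if a = q ∧ b = c then P q else 0) := by
      refine Finset.sum_congr rfl fun a _ => Finset.sum_congr rfl fun b _ => ?_
      by_cases hab : a = b
      · subst hab
        rw [if_neg (by simp), if_neg (fun h => hcq (h.2.symm.trans h.1))]
      · simp [hab]
    rw [hrw]
    have h2 : (∑ a : Fin k, ∑ b : Fin k, (if a = q ∧ b = c then P q else 0)) = P q := by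
      rw [Finset.sum_eq_single q]
      · simp
      · intro a _ ha; simp [ha]
      · simp
    rw [h2]
    exact le_max_left _ _
end

section
/- Suppose a random tree's root is non-mixing with probability at most Pr[deg > Δ₊] + Pr[B(Δ₊, q) > Δ₊^{δ}], where q bounds the probability each child's subtree is non-mixing. If q ∈ [0, 3/4) satisfies q ≥ Σ_{i>Δ₊} ξ_i + Pr[B(Δ₊, q) ≥ Δ₊^{δ}], then by induction on the height h, for every h ≥ 0, the probability that the root of the Galton–Watson tree of height h (with offspring distribution ξ) is non-mixing is at most q. -/
open Finset

/-- `Pr[B(n,x) ≥ m]` for a binomial random variable with `n` trials and success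
probability `x`. -/
noncomputable def binomUpperTail (n : ℕ) (x : ℝ) (m : ℕ) : ℝ :=
  ∑ j ∈ Finset.Icc m n, (n.choose j : ℝ) * x ^ j * (1 - x) ^ (n - j)

/-- if `p h` is the probability that the root of the height-`h`
Galton–Watson tree (offspring distribution `ξ`) is non-mixing, so that `p 0 = 0`
(leaves are mixing by default) and the recursive domination
`p (h+1) ≤ Pr[deg > Δ₊] + Pr[B(Δ₊, x) ≥ Δ₊^δ]` holds whenever `p h ≤ x`, and
`q ∈ [0, 3/4)` satisfies `q ≥ Σ_{i>Δ₊} ξ_i + Pr[B(Δ₊, q) ≥ Δ₊^δ]`, then for every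
height `h`, the probability that the root is non-mixing is at most `q`. -/
theorem stmt16 (ξ : ℕ → ℝ) (hξ0 : ∀ i, 0 ≤ ξ i) (hξsum : ∑' i, ξ i = 1)
    (Δ : ℕ) (δ : ℝ) (hδ0 : 0 < δ) (hδ1 : δ < 1 / 10)
    (t : ℕ) (ht : t = ⌈(Δ : ℝ) ^ δ⌉₊)
    (p : ℕ → ℝ) (hp0 : ∀ h, 0 ≤ p h) (hpinit : p 0 = 0)
    (hprec : ∀ h : ℕ, ∀ x : ℝ, p h ≤ x → 0 ≤ x →
      p (h + 1) ≤ (∑' i, if Δ < i then ξ i else 0) + binomUpperTail Δ x t)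
    (q : ℝ) (hq0 : 0 ≤ q) (hq1 : q < 3 / 4)
    (hqfix : (∑' i, if Δ < i then ξ i else 0) + binomUpperTail Δ q t ≤ q) :
    ∀ h, p h ≤ q := by
  intro h
  induction h with
  | zero => rw [hpinit]; exact hq0
  | succ n ih => exact le_trans (hprec n q ih hq0) hqfix
end

section
/- Let P_h ∈ [0,1] satisfy P_0 = 1 and P_h ≥ (1 − exp(−P_{h−1}·D))^{k−1} − s, where D = F/(k−1)·(1 − 1/log k) for F ≥ Δ₋ − Δ₋^{δ}, and s ≤ 1/k². If the function f(x) = (1 − exp(−xD))^{k−1} − s satisfies f(1 − 1/log k) > 1 − 1/log k (which holds when k ≤ (1−α)Δ₋/ln Δ₋ for fixed α > 0 and sufficiently large Δ₋), then since f is increasing, P_h > 1 − 1/log k for all h ≥ 0. -/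
/-- the fixed-point/monotonicity argument for freezing. `P h` is the
probability that the root colour of a height-`h` tree with freezable root is frozen;
it satisfies `P 0 = 1` and `P (h+1) ≥ f (P h)` where
`f x = (1 − exp(−x·D))^{k−1} − s`, `D = F/(k−1)·(1 − 1/log k)` with
`F ≥ Δ₋ − Δ₋^δ`, and `s ≤ 1/k²`. If `f(1 − 1/log k) > 1 − 1/log k`, then since `f` is
increasing, `P h > 1 − 1/log k` for all `h ≥ 0`. -/
theorem stmt18 (k : ℕ) (hk : 2 ≤ k) (hlogk : 1 < Real.log k)
    (F D s : ℝ) (Δm : ℕ) (δ : ℝ)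
    (hF : F ≥ (Δm : ℝ) - (Δm : ℝ) ^ δ)
    (hD : D = F / ((k : ℝ) - 1) * (1 - 1 / Real.log k)) (hDpos : 0 < D)
    (hs0 : 0 ≤ s) (hs : s ≤ 1 / (k : ℝ) ^ 2)
    (P : ℕ → ℝ) (hP0 : P 0 = 1) (hP1 : ∀ h, P h ≤ 1)
    (hrec : ∀ h, P (h + 1) ≥ (1 - Real.exp (-(P h) * D)) ^ (k - 1) - s)
    (hfix : (1 - Real.exp (-(1 - 1 / Real.log k) * D)) ^ (k - 1) - s
        > 1 - 1 / Real.log k) :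
    ∀ h : ℕ, P h > 1 - 1 / Real.log k := by
  have hl0 : 0 < 1 / Real.log k := by positivity
  intro h
  induction h with
  | zero => rw [hP0]; linarith
  | succ n ih =>
    have hbase : 0 ≤ 1 - Real.exp (-(1 - 1 / Real.log k) * D) := by
      have h1 : (1 : ℝ) - 1 / Real.log k > 0 := by
        have : 1 / Real.log k < 1 := by
          rw [div_lt_one (by linarith)]; linarith
        linarith
      have : Real.exp (-(1 - 1 / Real.log k) * D) ≤ 1 := by
        apply Real.exp_le_one_iff.mpr; nlinarith
      linarith
    have hmono : (1 - Real.exp (-(1 - 1 / Real.log k) * D)) ^ (k - 1)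
        ≤ (1 - Real.exp (-(P n) * D)) ^ (k - 1) := by
      apply pow_le_pow_left₀ hbase
      have : Real.exp (-(P n) * D) ≤ Real.exp (-(1 - 1 / Real.log k) * D) := by
        apply Real.exp_le_exp.mpr
        nlinarith [ih]
      linarith
    have := hrec n
    linarith
end
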